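/- arXiv:2110.02043 — 2 statements merged into one kernel-verified Lean document; each statement's English description precedes it below -/
import Mathlib

section
/- Let G be a connected multigraph obtained by subdividing each edge of a 2-connected graph H once and replacing each original vertex v by a graph B_v containing its d(v) attachment points (the 'substitution' construction). If every cycle of H has length greater than ℓ and every copy of B has no cycle of length exactly ℓ, then the resulting graph G' has no cycle of length exactly ℓ. -/
/-- The identification relation for the substitution construction: subdividing every edge
of `G` and, for adjacent `v, u`, identifying the attachment vertex `att v u` of the copy
of `B` at `v` with the attachment vertex `att u v` of the copy at `u` (both become the
subdivision vertex of the edge `vu`). -/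
def SubRel {V W : Type*} (G : SimpleGraph V) (att : V → V → W) :
    V × W → V × W → Prop :=
  fun p q => G.Adj p.1 q.1 ∧ p.2 = att p.1 q.1 ∧ q.2 = att q.1 p.1

/-- The substitution construction: one copy of `B` for each vertex of `G`, glued along
the subdivision vertices of the edges of `G` via the attachment map `att`. -/
def Subst {V W : Type*} (G : SimpleGraph V) (B : SimpleGraph W) (att : V → V → W) :
    SimpleGraph (Quot (SubRel G att)) where
  Adj x y := x ≠ y ∧ ∃ (v : V) (a b : W), B.Adj a b ∧
      x = Quot.mk (SubRel G att) (v, a) ∧ y = Quot.mk (SubRel G att) (v, b)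
  symm := ⟨by
    rintro x y ⟨hxy, v, a, b, hab, hx, hy⟩
    exact ⟨hxy.symm, v, b, a, hab.symm, hy, hx⟩⟩
  loopless := ⟨fun x h => h.1 rfl⟩

/-! Every edge of `Subst G B att` lies in a unique copy of `B`, and two copies meet in at most one
vertex, so each copy is an induced subgraph isomorphic to `B`. A cycle that stays inside one copy
is therefore a cycle of `B`. Otherwise, recording the copies it passes through projects it to a
closed walk in `G` of positive length; every step of that walk is witnessed by the subdivision
vertex of its edge, and these are distinct vertices of the cycle, so the projection is a circuit
of `G` no longer than the cycle, and contains a cycle of `G`, of length `> ℓ`. -/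

open SimpleGraph Walk

namespace SimpleGraph

variable {V V' : Type*} {G : SimpleGraph V} {G' : SimpleGraph V'}

theorem Walk.IsTrail.of_nodup_map_darts {α : Type*} {f : G.Dart → α}
    (hf : ∀ d, f d.symm = f d) {u v : V} {p : G.Walk u v} (h : (p.darts.map f).Nodup) :
    p.IsTrail := by
  rw [isTrail_def, edges, List.Nodup, List.pairwise_map]
  rw [List.Nodup, List.pairwise_map] at h
  refine h.imp fun {d d'} hne heq => hne ?_
  rcases (dart_edge_eq_iff d d').mp heq with rfl | rfl
  · rfl
  · exact hf d'

theorem Walk.IsCycle.exists_isCycle_of_support_subset_range (f : G ↪g G') {x : V'}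
    {c : G'.Walk x x} (hc : c.IsCycle) (hs : ∀ y ∈ c.support, y ∈ Set.range f) :
    ∃ (a : V) (q : G.Walk a a), q.IsCycle ∧ q.length = c.length := by
  let e : G'.induce (Set.range f) ↪g G' := Embedding.induce _
  have hind : (c.induce _ hs).IsCycle := by
    rw [← isCycle_map_iff_of_injective (f := e.toHom) e.injective, map_induce]
    exact hc
  refine ⟨_, _, hind.map (f := f.isoInduceRange.symm.toEmbedding.toHom)
    f.isoInduceRange.symm.injective, ?_⟩
  rw [length_map, ← length_map e.toHom, map_induce]
  rfl

end SimpleGraph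

namespace Subst

variable {V W : Type*} {G : SimpleGraph V} {B : SimpleGraph W} {att : V → V → W}

theorem equivalence_eq_or_subRel (hatt : ∀ v, Set.InjOn (att v) (G.neighborSet v)) :
    Equivalence fun p q => p = q ∨ SubRel G att p q where
  refl _ := .inl rfl
  symm := by
    rintro p q (rfl | ⟨hpq, hp, hq⟩)
    exacts [.inl rfl, .inr ⟨hpq.symm, hq, hp⟩]
  trans := by
    rintro p q r (rfl | ⟨hpq, hp, hq⟩) (rfl | ⟨hqr, hq', hr⟩)
    · exact .inl rfl
    · exact .inr ⟨hqr, hq', hr⟩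
    · exact .inr ⟨hpq, hp, hq⟩
    · have h₁ : p.1 = r.1 := hatt q.1 hpq.symm hqr (hq.symm.trans hq')
      exact .inl (Prod.ext h₁ (by rw [hp, hr, h₁]))

theorem mk_eq_mk_iff (hatt : ∀ v, Set.InjOn (att v) (G.neighborSet v)) {p q : V × W} :
    Quot.mk (SubRel G att) p = Quot.mk (SubRel G att) q ↔ p = q ∨ SubRel G att p q := by
  refine ⟨fun h => ?_, ?_⟩
  · exact (equivalence_eq_or_subRel hatt).eqvGen_iff.mp
      ((Quot.eqvGen_exact h).mono fun _ _ => .inr)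
  · rintro (rfl | h)
    exacts [rfl, Quot.sound h]

theorem mk_injective (hatt : ∀ v, Set.InjOn (att v) (G.neighborSet v)) (v : V) :
    Function.Injective fun a : W => Quot.mk (SubRel G att) (v, a) := fun a b h => by
  rcases (mk_eq_mk_iff hatt).mp h with h | ⟨hvv, -⟩
  exacts [congrArg Prod.snd h, absurd hvv (G.loopless.irrefl v)]

theorem subRel_of_mk_eq_mk (hatt : ∀ v, Set.InjOn (att v) (G.neighborSet v)) {v u : V}
    {a b : W} (hvu : v ≠ u) (h : Quot.mk (SubRel G att) (v, a) = Quot.mk _ (u, b)) :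
    SubRel G att (v, a) (u, b) :=
  ((mk_eq_mk_iff hatt).mp h).resolve_left fun h => hvu (congrArg Prod.fst h)

/-- Distinct copies of `B` share at most one vertex. -/
theorem eq_of_mk_eq_mk (hatt : ∀ v, Set.InjOn (att v) (G.neighborSet v)) {v u : V}
    {a b a' b' : W} (hab : a ≠ b) (ha : Quot.mk (SubRel G att) (v, a) = Quot.mk _ (u, a'))
    (hb : Quot.mk (SubRel G att) (v, b) = Quot.mk _ (u, b')) : v = u := by
  by_contra hvu
  exact hab ((subRel_of_mk_eq_mk hatt hvu ha).2.1.trans (subRel_of_mk_eq_mk hatt hvu hb).2.1.symm)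

theorem adj_mk_mk_iff (hatt : ∀ v, Set.InjOn (att v) (G.neighborSet v)) {v : V} {a b : W} :
    (Subst G B att).Adj (Quot.mk _ (v, a)) (Quot.mk _ (v, b)) ↔ B.Adj a b := by
  refine ⟨fun ⟨hne, v', a', b', hab', ha, hb⟩ => ?_, fun hab => ?_⟩
  · have hab_ne : a ≠ b := fun h => hne (by rw [h])
    obtain rfl := eq_of_mk_eq_mk hatt hab_ne ha hb
    rwa [mk_injective hatt v ha, mk_injective hatt v hb]
  · exact ⟨fun h => hab.ne (mk_injective hatt v h), v, a, b, hab, rfl, rfl⟩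

def copyEmbedding (hatt : ∀ v, Set.InjOn (att v) (G.neighborSet v)) (v : V) :
    B ↪g Subst G B att where
  toFun a := Quot.mk _ (v, a)
  inj' := mk_injective hatt v
  map_rel_iff' := adj_mk_mk_iff hatt

variable (G att) in
def subdivVertex (d : G.Dart) : Quot (SubRel G att) := Quot.mk _ (d.fst, att d.fst d.snd)

theorem subdivVertex_symm (d : G.Dart) : subdivVertex G att d.symm = subdivVertex G att d :=
  Quot.sound ⟨d.adj.symm, rfl, rfl⟩

theorem exists_walk_projection (hatt : ∀ v, Set.InjOn (att v) (G.neighborSet v))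
    {x y : Quot (SubRel G att)} (w : (Subst G B att).Walk x y) {v : V} {a : W}
    (hx : x = Quot.mk _ (v, a)) :
    ∃ (u : V) (p : G.Walk v u) (b : W), y = Quot.mk _ (u, b) ∧
      -- each edge of `p` is a change of copy along `w`, made at that edge's subdivision vertex
      (p.darts.map (subdivVertex G att)).Sublist w.support.dropLast ∧
      (p.length = 0 → ∀ z ∈ w.support, z ∈ Set.range (copyEmbedding (B := B) hatt v)) := by
  induction w generalizing v a with
  | nil =>
    refine ⟨v, nil, a, hx, by simp, fun _ z hz => ⟨a, ?_⟩⟩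
    rw [support_nil, List.mem_singleton] at hz
    exact (hz.trans hx).symm
  | @cons x₀ x₁ y h w ih =>
    obtain ⟨v', a', b', -, hx₀, hx₁⟩ := h.2
    obtain ⟨u, p, b, hy, hsub, hnil⟩ := ih hx₁
    rw [support_cons, List.dropLast_cons_of_ne_nil (support_ne_nil w)]
    by_cases hv : v' = v
    · subst hv
      refine ⟨u, p, b, hy, hsub.cons x₀, fun hp z hz => ?_⟩
      rcases List.mem_cons.mp hz with rfl | hz
      exacts [⟨a', hx₀.symm⟩, hnil hp z hz]
    · obtain ⟨hadj, ha, -⟩ := subRel_of_mk_eq_mk hatt (Ne.symm hv) (hx.symm.trans hx₀)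
      refine ⟨u, cons hadj p, b, hy, ?_, by simp⟩
      rw [darts_cons, List.map_cons]
      have : subdivVertex G att ⟨(v, v'), hadj⟩ = x₀ := by
        rw [hx]; exact congrArg (fun c => Quot.mk _ (v, c)) ha.symm
      exact this ▸ hsub.cons_cons x₀

theorem exists_closed_walk_projection (hatt : ∀ v, Set.InjOn (att v) (G.neighborSet v))
    {x : Quot (SubRel G att)} (c : (Subst G B att).Walk x x) (hc : c ≠ nil) :
    ∃ v : V, (∀ z ∈ c.support, z ∈ Set.range (copyEmbedding (B := B) hatt v)) ∨
      ∃ q : G.Walk v v, q.length ≠ 0 ∧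
        (q.darts.map (subdivVertex G att)).Sublist c.support.tail := by
  cases c with
  | nil => exact absurd rfl hc
  | @cons _ x₁ _ h c =>
    obtain ⟨v, a, b, -, hx, hx₁⟩ := h.2
    obtain ⟨u, p, b', hend, hsub, hnil⟩ := exists_walk_projection hatt c hx₁
    refine ⟨v, ?_⟩
    rw [support_cons, List.tail_cons]
    by_cases hp : p.length = 0
    · refine .inl fun z hz => ?_
      rcases List.mem_cons.mp hz with rfl | hz
      exacts [⟨a, hx.symm⟩, hnil hp z hz]
    refine .inr ?_
    by_cases huv : u = v
    · subst huv
      exact ⟨p, hp, hsub.trans (List.dropLast_sublist _)⟩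
    · obtain ⟨hadj, hb', -⟩ := subRel_of_mk_eq_mk hatt huv (hend.symm.trans hx)
      refine ⟨p.concat hadj, by simp, ?_⟩
      have : subdivVertex G att ⟨(u, v), hadj⟩ = x := by
        rw [hend]; exact congrArg (fun c => Quot.mk _ (u, c)) hb'.symm
      rw [darts_concat, List.map_concat, List.concat_eq_append, this, ← dropLast_support_concat]
      exact hsub.append_right _

end Subst

open Subst in
theorem subst_no_ell_cycle_general {V W : Type*} (G : SimpleGraph V) (B : SimpleGraph W)
    (att : V → V → W) (ℓ : ℕ)
    (hatt : ∀ v u u' : V, G.Adj v u → G.Adj v u' → att v u = att v u' → u = u')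
    (hGcyc : ∀ (v : V) (c : G.Walk v v), c.IsCycle → ℓ < c.length)
    (hBcyc : ∀ (w : W) (c : B.Walk w w), c.IsCycle → c.length ≠ ℓ) :
    ∀ (x : Quot (SubRel G att)) (c : (Subst G B att).Walk x x),
      c.IsCycle → c.length ≠ ℓ := by
  have hatt' : ∀ v, Set.InjOn (att v) (G.neighborSet v) := fun v _ hu _ hu' => hatt v _ _ hu hu'
  intro x c hc
  obtain ⟨v, hcopy | ⟨q, hq0, hsub⟩⟩ := exists_closed_walk_projection hatt' c hc.ne_nil
  · obtain ⟨a, q, hq, hlen⟩ := hc.exists_isCycle_of_support_subset_range _ hcopy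
    exact hlen ▸ hBcyc a q hq
  · classical
    have hcirc : q.IsCircuit :=
      ⟨.of_nodup_map_darts subdivVertex_symm (hc.support_nodup.sublist hsub),
        fun h => hq0 (by simp [h])⟩
    have hlen : q.length ≤ c.length := by
      simpa [length_darts, length_support] using hsub.length_le
    exact ((hGcyc v _ hcirc.isCycle_cycleBypass).trans_le
      (q.length_cycleBypass_le_length.trans hlen)).ne'

theorem subst_no_ell_cycle {V W : Type*} (G : SimpleGraph V) (B : SimpleGraph W)
    (att : V → V → W) (ℓ : ℕ)
    (hatt : ∀ v u u' : V, G.Adj v u → G.Adj v u' → att v u = att v u' → u = u')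
    (hconn : G.Connected)
    (h2conn : ∀ v : V, (((⊤ : G.Subgraph).deleteVerts {v}).coe).Connected)
    (hGcyc : ∀ (v : V) (c : G.Walk v v), c.IsCycle → ℓ < c.length)
    (hBcyc : ∀ (w : W) (c : B.Walk w w), c.IsCycle → c.length ≠ ℓ) :
    ∀ (x : Quot (SubRel G att)) (c : (Subst G B att).Walk x x),
      c.IsCycle → c.length ≠ ℓ :=
  subst_no_ell_cycle_general G B att ℓ hatt hGcyc hBcyc
end

section
/- For all i ≥ 1, 2^{i+1} < (7/2)·(3 + (3^i - 1)/2)^{log_3 2}. -/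
/-!
Since `3 ^ logb 3 2 = 2` and `n_i ≥ 3 ^ i / 2`, we get `n_i ^ logb 3 2 ≥ 2 ^ i / 2 ^ logb 3 2`;
as `logb 3 2 < 2 / 3` (i.e. `8 < 9`), `2 ^ logb 3 2 < 4 ^ (1 / 3) < 7 / 4`, which leaves room for
the factor `7 / 2`.
-/

open Real

lemma logb_three_two_lt_two_thirds : logb 3 2 < 2 / 3 := by
  rw [logb, div_lt_iff₀ (log_pos (by norm_num))]
  have h8 : 3 * log 2 = log 8 := by
    rw [show (8 : ℝ) = 2 ^ 3 by norm_num, log_pow]; norm_num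
  have h9 : 2 * log 3 = log 9 := by
    rw [show (9 : ℝ) = 3 ^ 2 by norm_num, log_pow]; norm_num
  have h89 : log 8 < log 9 := log_lt_log (by norm_num) (by norm_num)
  linarith

lemma two_rpow_logb_three_two_lt : (2 : ℝ) ^ logb 3 2 < 7 / 4 := by
  have hcube : ((2 : ℝ) ^ ((2 : ℝ) / 3)) ^ 3 = 4 := by
    rw [← rpow_natCast, ← rpow_mul (by norm_num)]; norm_num
  calc (2 : ℝ) ^ logb 3 2 < 2 ^ ((2 : ℝ) / 3) :=
        rpow_lt_rpow_of_exponent_lt (by norm_num) logb_three_two_lt_two_thirds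
    _ < 7 / 4 := lt_of_pow_lt_pow_left₀ 3 (by norm_num) (by rw [hcube]; norm_num)

lemma pow_rpow_logb {b : ℝ} (hb : 0 < b) (hb₁ : b ≠ 1) {a : ℝ} (ha : 0 < a) (n : ℕ) :
    (b ^ n) ^ logb b a = a ^ n := by
  rw [← rpow_natCast, ← rpow_mul hb.le, mul_comm, rpow_mul hb.le, rpow_logb hb hb₁ ha,
    rpow_natCast]

theorem moon_moser_inequality_general (i : ℕ) :
    (2 : ℝ) ^ (i + 1) < (7 / 2) * ((3 : ℝ) + ((3 : ℝ) ^ i - 1) / 2) ^ Real.logb 3 2 := by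
  have hc : 0 < (2 : ℝ) ^ logb 3 2 := by positivity
  have hbase : (3 : ℝ) ^ i / 2 ≤ 3 + ((3 : ℝ) ^ i - 1) / 2 := by linarith
  calc (2 : ℝ) ^ (i + 1) = 2 * 2 ^ i := by ring
    _ < 7 / 2 * (2 ^ i / 2 ^ logb 3 2) := by
        rw [mul_div_assoc', lt_div_iff₀ hc]
        nlinarith [two_rpow_logb_three_two_lt, pow_pos (two_pos : (0 : ℝ) < 2) i]
    _ = 7 / 2 * ((3 : ℝ) ^ i / 2) ^ logb 3 2 := by
        rw [div_rpow (by positivity) (by norm_num), pow_rpow_logb (by norm_num) (by norm_num)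
          (by norm_num)]
    _ ≤ 7 / 2 * (3 + ((3 : ℝ) ^ i - 1) / 2) ^ logb 3 2 := by
        gcongr
        exact logb_nonneg (by norm_num) (by norm_num)

theorem moon_moser_inequality (i : ℕ) (hi : 1 ≤ i) :
    (2 : ℝ) ^ (i + 1) < (7 / 2) * ((3 : ℝ) + ((3 : ℝ) ^ i - 1) / 2) ^ Real.logb 3 2 :=
  moon_moser_inequality_general i
end
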